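/- arXiv:2512.09474 — 2 statements merged into one kernel-verified Lean document; each statement's English description precedes it below -/
import Mathlib

section
/- Let f : ℝ × ℝ → ℝ be continuous, g(w) = w·sin(ln(1+|w|)), and let P, K ⊂ ℝ be nonempty compact sets. Define V = [-1,-1/2] ∪ [1/2,1] and χ(s) = min{ v·f(ρ,ξ) + v·g(sv) : ρ ∈ P, ξ ∈ K, v ∈ V }. Then sup_{s ≥ 0} χ(s) = +∞. -/
/-!
Take `s = 2 (exp t - 1)` with `t = π/2 + 2πn`. Then `1 + s/2 = exp t`, so for every `|v| ∈ [1/2, 1]`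
the phase `log (1 + s|v|)` lies in `[t, t + log 2]`, a window on which `sin ≥ 1/2` because
`log 2 < π/3`. Hence `v g(sv) = s v² sin (log (1 + s|v|)) ≥ s/8` uniformly on `V`, while
`|v f(ρ, ξ)|` stays bounded by compactness; letting `n → ∞` makes `χ(s)` arbitrarily large.
-/

open Real Set

lemma abs_mem_Icc_of_mem_Icc_union_Icc {a b v : ℝ} (ha : 0 ≤ a)
    (hv : v ∈ Icc (-b) (-a) ∪ Icc a b) : |v| ∈ Icc a b := by
  rcases hv with ⟨h₁, h₂⟩ | ⟨h₁, h₂⟩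
  · rw [abs_of_nonpos (by linarith)]
    exact ⟨by linarith, by linarith⟩
  · rw [abs_of_nonneg (by linarith)]
    exact ⟨h₁, h₂⟩

lemma one_half_le_sin_of_mem_Icc (n : ℕ) {x : ℝ}
    (hx : x ∈ Icc (π / 6 + n * (2 * π)) (5 * π / 6 + n * (2 * π))) : 1 / 2 ≤ sin x := by
  obtain ⟨h₁, h₂⟩ := hx
  have hπ := pi_pos
  have hcos : cos (π / 3) ≤ cos |x - n * (2 * π) - π / 2| :=
    cos_le_cos_of_nonneg_of_le_pi (abs_nonneg _) (by linarith) (abs_le.mpr ⟨by linarith, by linarith⟩)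
  rwa [cos_abs, cos_sub_pi_div_two, sin_sub_nat_mul_two_pi, cos_pi_div_three] at hcos

lemma exists_forall_le_sq_mul_sin_log (M : ℝ) :
    ∃ s : ℝ, 0 ≤ s ∧ M < s ∧ ∀ a ∈ Icc (1 / 2 : ℝ) 1, s / 8 ≤ s * a ^ 2 * sin (log (1 + s * a)) := by
  obtain ⟨n, hn⟩ := exists_nat_gt M
  set t : ℝ := π / 2 + n * (2 * π) with ht
  have hπ := pi_gt_three
  have ht0 : 0 ≤ t := by positivity
  set s := 2 * (exp t - 1) with hs
  have hs0 : 0 ≤ s := by linarith [one_le_exp ht0]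
  refine ⟨s, hs0, by nlinarith [add_one_le_exp t, (n.cast_nonneg : (0 : ℝ) ≤ n)], ?_⟩
  rintro a ⟨ha₁, ha₂⟩
  have hlow : exp t ≤ 1 + s * a := by nlinarith
  have hupp : 1 + s * a ≤ exp (log 2 + t) := by
    rw [exp_add, exp_log two_pos]; nlinarith
  have hphase : log (1 + s * a) ∈ Icc t (log 2 + t) :=
    ⟨(le_log_iff_exp_le (by positivity)).mpr hlow,
      (log_le_iff_le_exp (by positivity)).mpr hupp⟩
  have hsin : 1 / 2 ≤ sin (log (1 + s * a)) := by
    apply one_half_le_sin_of_mem_Icc n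
    have := log_two_lt_d9
    exact ⟨by linarith [hphase.1], by norm_num at this; linarith [hphase.2]⟩
  have hsq : s * (1 / 4) ≤ s * a ^ 2 := mul_le_mul_of_nonneg_left (by nlinarith) hs0
  nlinarith [mul_le_mul_of_nonneg_left hsin (by positivity : 0 ≤ s * a ^ 2)]

theorem stmt_6 (f : ℝ × ℝ → ℝ) (hf : Continuous f)
    (g : ℝ → ℝ) (hg : ∀ w, g w = w * Real.sin (Real.log (1 + |w|)))
    (P K : Set ℝ) (hPc : IsCompact P) (hPne : P.Nonempty)
    (hKc : IsCompact K) (hKne : K.Nonempty)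
    (V : Set ℝ) (hV : V = Set.Icc (-1 : ℝ) (-1/2) ∪ Set.Icc (1/2 : ℝ) 1)
    (χ : ℝ → ℝ)
    (hχ : ∀ s : ℝ, χ s =
      sInf {y : ℝ | ∃ ρ ∈ P, ∃ ξ ∈ K, ∃ v ∈ V, y = v * f (ρ, ξ) + v * g (s * v)}) :
    ∀ M : ℝ, ∃ s : ℝ, 0 ≤ s ∧ M < χ s := by
  intro M
  obtain ⟨C, hC⟩ := (hPc.prod hKc).exists_bound_of_continuousOn hf.continuousOn
  obtain ⟨s, hs0, hMs, hs⟩ := exists_forall_le_sq_mul_sin_log (8 * (M + C))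
  have habsV : ∀ v ∈ V, |v| ∈ Icc (1 / 2 : ℝ) 1 := fun v hv =>
    abs_mem_Icc_of_mem_Icc_union_Icc (by norm_num) (by rw [hV] at hv; norm_num at hv ⊢; exact hv)
  refine ⟨s, hs0, (show M < -C + s / 8 by linarith).trans_le ?_⟩
  rw [hχ]
  apply le_csInf
  · obtain ⟨ρ, hρ⟩ := hPne
    obtain ⟨ξ, hξ⟩ := hKne
    exact ⟨_, ρ, hρ, ξ, hξ, 1, by rw [hV]; norm_num, rfl⟩
  · rintro _ ⟨ρ, hρ, ξ, hξ, v, hv, rfl⟩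
    have hf_term : |v * f (ρ, ξ)| ≤ C := by
      rw [abs_mul]
      exact (mul_le_of_le_one_left (abs_nonneg _) (habsV v hv).2).trans (hC _ ⟨hρ, hξ⟩)
    have hg_term : v * g (s * v) = s * |v| ^ 2 * sin (log (1 + s * |v|)) := by
      rw [hg, abs_mul, abs_of_nonneg hs0, sq_abs]; ring
    linarith [(abs_le.mp hf_term).1, hs |v| (habsV v hv)]
end

section
/- There exist strictly increasing unbounded sequences (a_k) and (b_k) of positive reals such that v·g(a_k v) ≥ (1/4)a_k·sin(ln 2) and v·g(-b_k v) ≥ (1/4)b_k·sin(ln 2) for all k and all v with 1/2 ≤ |v| ≤ 1, where g(w) = w·sin(ln(1+|w|)). -/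
/-!
On the annulus `1/2 ≤ |v| ≤ 1` the quantity `1 + c|v|` ranges over `[1 + c/2, 1 + c]`. For
`c = 4eˢ - 2` this interval lies in `[2eˢ, 4eˢ]`, so `log (1 + c|v|) - s ∈ [log 2, 2 log 2]`, an
interval on which `sin ≥ sin (log 2) > 0` because `2 log 2 ≤ π - log 2`. Taking `s = 2kπ` makes
`sin (log (1 + c|v|)) ≥ sin (log 2)`, taking `s = (2k+1)π` makes it `≤ -sin (log 2)`; since
`v · g(±cv) = ±c v² sin (log (1 + c|v|))` and `v² ≥ 1/4`, both bounds follow.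
-/

open Real Filter Set

lemma sin_log_two_pos : 0 < sin (log 2) :=
  sin_pos_of_pos_of_lt_pi (log_pos one_lt_two) (by linarith [log_two_lt_d9, pi_gt_three])

lemma sin_log_two_le_sin {t : ℝ} (h₁ : log 2 ≤ t) (h₂ : t ≤ 2 * log 2) :
    sin (log 2) ≤ sin t := by
  have := log_two_lt_d9
  have := pi_gt_three
  exact strictMonoOn_sin.monotoneOn ⟨by linarith, by linarith⟩ ⟨by linarith, by linarith⟩ h₁

noncomputable def scale (s : ℝ) : ℝ := 4 * exp s - 2

lemma strictMono_scale : StrictMono scale := fun _ _ h => by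
  unfold scale
  gcongr

lemma two_le_scale {s : ℝ} (hs : 0 ≤ s) : 2 ≤ scale s := by
  unfold scale
  linarith [one_le_exp hs]

lemma tendsto_scale_atTop : Tendsto scale atTop atTop :=
  tendsto_atTop_add_const_right _ _ (tendsto_exp_atTop.const_mul_atTop four_pos)

lemma log_one_add_scale_mul_sub_mem {s u : ℝ} (hs : 0 ≤ s) (hu₁ : 1 / 2 ≤ u) (hu₂ : u ≤ 1) :
    log (1 + scale s * u) - s ∈ Icc (log 2) (2 * log 2) := by
  have hc := two_le_scale hs
  have hlow : 2 * exp s ≤ 1 + scale s * u := by unfold scale at hc ⊢; nlinarith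
  have hup : 1 + scale s * u ≤ 2 ^ 2 * exp s := by unfold scale at hc ⊢; nlinarith
  have hlog₁ := log_le_log (by positivity) hlow
  have hlog₂ := log_le_log (by positivity) hup
  rw [log_mul two_ne_zero (exp_pos s).ne', log_exp] at hlog₁
  rw [log_mul (by norm_num) (exp_pos s).ne', log_exp, log_pow] at hlog₂
  constructor <;> push_cast at * <;> linarith

lemma sin_log_two_le_sin_log_one_add_scale_mul (k : ℕ) {u : ℝ} (hu₁ : 1 / 2 ≤ u) (hu₂ : u ≤ 1) :
    sin (log 2) ≤ sin (log (1 + scale (2 * k * π) * u)) := by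
  obtain ⟨h₁, h₂⟩ := log_one_add_scale_mul_sub_mem (s := 2 * k * π) (by positivity) hu₁ hu₂
  have hper := sin_add_nat_mul_two_pi (log (1 + scale (2 * k * π) * u) - 2 * k * π) k
  rw [show log (1 + scale (2 * k * π) * u) - 2 * k * π + k * (2 * π)
    = log (1 + scale (2 * k * π) * u) by ring] at hper
  rw [hper]
  exact sin_log_two_le_sin h₁ h₂

lemma sin_log_one_add_scale_mul_le_neg (k : ℕ) {u : ℝ} (hu₁ : 1 / 2 ≤ u) (hu₂ : u ≤ 1) :
    sin (log (1 + scale (2 * k * π + π) * u)) ≤ -sin (log 2) := by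
  obtain ⟨h₁, h₂⟩ :=
    log_one_add_scale_mul_sub_mem (s := 2 * k * π + π) (by positivity) hu₁ hu₂
  have hper := sin_add_nat_mul_two_pi (log (1 + scale (2 * k * π + π) * u) - (2 * k * π + π) + π) k
  rw [show log (1 + scale (2 * k * π + π) * u) - (2 * k * π + π) + π + k * (2 * π)
    = log (1 + scale (2 * k * π + π) * u) by ring, sin_add_pi] at hper
  rw [hper, neg_le_neg_iff]
  exact sin_log_two_le_sin h₁ h₂

lemma quarter_mul_sin_log_two_le {c v S : ℝ} (hc : 0 ≤ c) (hv : 1 / 2 ≤ |v|)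
    (hS : sin (log 2) ≤ S) : 1 / 4 * c * sin (log 2) ≤ c * v ^ 2 * S := by
  have hv2 : 1 / 4 ≤ v ^ 2 := by nlinarith [sq_abs v]
  have := sin_log_two_pos
  calc 1 / 4 * c * sin (log 2) ≤ v ^ 2 * c * sin (log 2) := by gcongr
    _ ≤ c * v ^ 2 * S := by rw [mul_comm (v ^ 2)]; gcongr

lemma tendsto_two_mul_natCast_mul_pi_atTop : Tendsto (fun k : ℕ => 2 * k * π) atTop atTop :=
  (tendsto_natCast_atTop_atTop.const_mul_atTop two_pos).atTop_mul_const pi_pos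

lemma strictMono_two_mul_natCast_mul_pi : StrictMono (fun k : ℕ => 2 * k * π) := fun _ _ h => by
  have := pi_pos
  dsimp only
  gcongr

theorem stmt_16 (g : ℝ → ℝ) (hg : ∀ w, g w = w * Real.sin (Real.log (1 + |w|))) :
    ∃ a b : ℕ → ℝ, StrictMono a ∧ StrictMono b ∧
      (∀ k, 0 < a k) ∧ (∀ k, 0 < b k) ∧
      ¬ BddAbove (Set.range a) ∧ ¬ BddAbove (Set.range b) ∧
      (∀ k : ℕ, ∀ v : ℝ, 1/2 ≤ |v| → |v| ≤ 1 →
        v * g (a k * v) ≥ (1/4) * a k * Real.sin (Real.log 2)) ∧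
      (∀ k : ℕ, ∀ v : ℝ, 1/2 ≤ |v| → |v| ≤ 1 →
        v * g (-(b k) * v) ≥ (1/4) * b k * Real.sin (Real.log 2)) := by
  have hpos {s : ℝ} (hs : 0 ≤ s) : 0 < scale s := by linarith [two_le_scale hs]
  refine ⟨fun k => scale (2 * k * π), fun k => scale (2 * k * π + π),
    strictMono_scale.comp strictMono_two_mul_natCast_mul_pi,
    strictMono_scale.comp (strictMono_two_mul_natCast_mul_pi.add_const π),
    fun k => hpos (by positivity), fun k => hpos (by positivity),
    not_bddAbove_of_tendsto_atTop (tendsto_scale_atTop.comp tendsto_two_mul_natCast_mul_pi_atTop),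
    not_bddAbove_of_tendsto_atTop (tendsto_scale_atTop.comp
      (tendsto_atTop_add_const_right _ π tendsto_two_mul_natCast_mul_pi_atTop)), ?_, ?_⟩
  · intro k v hv₁ hv₂
    have hc := hpos (s := 2 * k * π) (by positivity)
    rw [hg, abs_mul, abs_of_pos hc, ge_iff_le]
    convert quarter_mul_sin_log_two_le hc.le hv₁
      (sin_log_two_le_sin_log_one_add_scale_mul k hv₁ hv₂) using 1
    ring
  · intro k v hv₁ hv₂
    have hc := hpos (s := 2 * k * π + π) (by positivity)
    rw [hg, abs_mul, abs_neg, abs_of_pos hc, ge_iff_le]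
    convert quarter_mul_sin_log_two_le hc.le hv₁
      (le_neg.mp (sin_log_one_add_scale_mul_le_neg k hv₁ hv₂)) using 1
    ring
end
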